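/- arXiv:1012.5393 — 4 statements merged into one kernel-verified Lean document; each statement's English description precedes it below -/
import Mathlib

section
/- Let G be a finite abelian group and A an S-ring over G satisfying the U/L-condition for A-subgroups L ≤ U. Then a permutation f of G belongs to Aut(A) if and only if the following three conditions hold: (i) f maps every coset of L onto a coset of L and every coset of U onto a coset of U; (ii) the permutation of G/L induced by f lies in Aut(A)^{G/L}, the group of all permutations of G/L induced by elements of Aut(A); (iii) for every g ∈ G there exist h ∈ G and δ ∈ Aut(A)^U — the group of permutations of U induced by those elements of Aut(A) that map U onto itself — such that f(u·g) = δ(u)·h for all u ∈ U. (Equivalently, Aut(A) equals the canonical generalized wreath product Aut(A)^U ≀_{U/L} Aut(A)^{G/L}.) -/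
open scoped Pointwise

/-- `X` is a union of members of the family `B` of sets. -/
def IsUnionOf {V : Type*} (B : Set (Set V)) (X : Set V) : Prop :=
  ∀ Y ∈ B, (Y ∩ X).Nonempty → Y ⊆ X

/-- An S-ring over a group `G`, presented by the partition of `G` into its basic sets.
The field `structConst` states exactly that the ℤ-span of the sums `∑_{x ∈ X} x`
(`X` a basic set) is closed under multiplication in the group ring `ℤG`, i.e. that this
span is a subring of `ℤG`. -/
structure SRing (G : Type*) [Group G] where
  basic : Set (Set G)
  isPartition : Setoid.IsPartition basic
  one_mem : {(1 : G)} ∈ basic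
  inv_mem : ∀ X ∈ basic, X⁻¹ ∈ basic
  structConst : ∀ X ∈ basic, ∀ Y ∈ basic, ∀ Z ∈ basic, ∀ z ∈ Z, ∀ z' ∈ Z,
      Set.ncard {p : G × G | p.1 ∈ X ∧ p.2 ∈ Y ∧ p.1 * p.2 = z}
        = Set.ncard {p : G × G | p.1 ∈ X ∧ p.2 ∈ Y ∧ p.1 * p.2 = z'}

/-- The group `G_right` of right translations, as a subgroup of `Sym(G)`. -/
def rightMulGroup (G : Type*) [Group G] : Subgroup (Equiv.Perm G) where
  carrier := {γ | ∃ g : G, ∀ x, γ x = x * g}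
  one_mem' := ⟨1, fun x => (mul_one x).symm⟩
  mul_mem' := by
    rintro γ δ ⟨g, hg⟩ ⟨h, hh⟩
    exact ⟨h * g, fun x => by simp only [Equiv.Perm.mul_apply, hg, hh, mul_assoc]⟩
  inv_mem' := by
    rintro γ ⟨g, hg⟩
    refine ⟨g⁻¹, fun x => γ.injective ?_⟩
    rw [show γ (γ⁻¹ x) = x from γ.apply_symm_apply x, hg, inv_mul_cancel_right]

/-- The radical `rad(X) = {g : gX = Xg = X}` of a subset of a group. -/
def radSet {G : Type*} [Group G] (X : Set G) : Set G :=
  {g : G | (fun y => g * y) '' X = X ∧ (fun y => y * g) '' X = X}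

namespace SRing

variable {G : Type*} [Group G]

/-- `X` is an `A`-set, i.e. a union of basic sets of `A`. -/
def IsASet (A : SRing G) (X : Set G) : Prop := IsUnionOf A.basic X

/-- The automorphism group of an S-ring, as a subgroup of `Sym(G)`. -/
def aut (A : SRing G) : Subgroup (Equiv.Perm G) where
  carrier := {f | ∀ X ∈ A.basic, ∀ g h : G, h * g⁻¹ ∈ X ↔ f h * (f g)⁻¹ ∈ X}
  one_mem' := fun X _ g h => Iff.rfl
  mul_mem' := by
    intro f f' hf hf' X hX g h
    exact (hf' X hX g h).trans (hf X hX (f' g) (f' h))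
  inv_mem' := by
    intro f hf X hX g h
    simpa using (hf X hX (f⁻¹ g) (f⁻¹ h)).symm

/-- An S-ring is schurian if its basic sets are the orbits of the stabilizer of `1`
in some permutation group `Γ` with `G_right ≤ Γ ≤ Sym(G)`. -/
def IsSchurian (A : SRing G) : Prop :=
  ∃ Γ : Subgroup (Equiv.Perm G), rightMulGroup G ≤ Γ ∧
    A.basic = {X : Set G | ∃ x : G, X = {y : G | ∃ γ ∈ Γ, γ 1 = 1 ∧ γ x = y}}

/-- An S-ring is normal if `G_right` is a normal subgroup of its automorphism group. -/
def IsNormal (A : SRing G) : Prop :=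
  rightMulGroup G ≤ A.aut ∧
    ∀ f ∈ A.aut, ∀ γ ∈ rightMulGroup G, f * γ * f⁻¹ ∈ rightMulGroup G

/-- The basic sets of the restriction `A_U` of `A` to a subgroup `U`. -/
def resBasic (A : SRing G) (U : Subgroup G) : Set (Set U) :=
  {Xr | ∃ X ∈ A.basic, X ⊆ ↑U ∧ Xr = ((↑) : U → G) ⁻¹' X}

/-- The basic sets of the quotient S-ring `A_{G/L}`. -/
def quotBasic (A : SRing G) (L : Subgroup G) : Set (Set (G ⧸ L)) :=
  {Xq | ∃ X ∈ A.basic, Xq = QuotientGroup.mk '' X}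

/-- The basic sets of the S-ring `A_{U/L}` over the section `U/L`. -/
def secBasic (A : SRing G) (U L : Subgroup G) : Set (Set (U ⧸ L.subgroupOf U)) :=
  {Xs | ∃ X ∈ A.basic, X ⊆ ↑U ∧
    Xs = QuotientGroup.mk '' (((↑) : U → G) ⁻¹' X)}

/-- The `U/L`-condition: `L` and `U` are `A`-subgroups, `L ≤ U`, `L` is normal in `G`, and
every basic set of `A` outside of `U` is a union of `L`-cosets. -/
def ULcondition (A : SRing G) (L U : Subgroup G) : Prop :=
  L.Normal ∧ L ≤ U ∧ A.IsASet ↑L ∧ A.IsASet ↑U ∧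
    ∀ X ∈ A.basic, X ⊆ (↑U : Set G)ᶜ → (↑L : Set G) * X = X ∧ X * (↑L : Set G) = X

/-- `B` is a proper (nontrivial) wreath product. -/
def IsProperWreath {K : Type*} [Group K] (B : SRing K) : Prop :=
  ∃ H : Subgroup K, B.IsASet ↑H ∧ H ≠ ⊥ ∧ H ≠ ⊤ ∧
    ∀ X ∈ B.basic, X ⊆ (↑H : Set K)ᶜ → (↑H : Set K) * X = X ∧ X * (↑H : Set K) = X

end SRing

/-- Two sets of permutations of `V` are 2-equivalent iff they have the same orbits in the
coordinatewise action on `V × V`. -/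
def TwoEquiv {V : Type*} (Γ Δ : Set (Equiv.Perm V)) : Prop :=
  ∀ p : V × V,
    {q : V × V | ∃ γ ∈ Γ, q = (γ p.1, γ p.2)} = {q : V × V | ∃ δ ∈ Δ, q = (δ p.1, δ p.2)}

/-- The holomorph `Hol(S)`, as a set of permutations of `S`. -/
def HolSet (S : Type*) [Group S] : Set (Equiv.Perm S) :=
  {π | ∃ (σ : S ≃* S) (s : S), ∀ x, π x = σ x * s}

/-- Permutations of `G ⧸ L` induced by the members of a set `Γ` of permutations of `G`. -/
def inducedQuot {G : Type*} [Group G] (Γ : Set (Equiv.Perm G)) (L : Subgroup G) :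
    Set (Equiv.Perm (G ⧸ L)) :=
  {σ | ∃ γ ∈ Γ, ∀ x : G, σ (QuotientGroup.mk x) = QuotientGroup.mk (γ x)}

/-- Permutations of the section `U/L` induced by the members of a set `Γ` of permutations
of `G` stabilizing `U` setwise. -/
def inducedSec {G : Type*} [Group G] (Γ : Set (Equiv.Perm G)) (U L : Subgroup G) :
    Set (Equiv.Perm (U ⧸ L.subgroupOf U)) :=
  {σ | ∃ γ ∈ Γ, (∀ u : U, γ ↑u ∈ U) ∧
    ∀ u v : U, γ ↑u = ↑v → σ (QuotientGroup.mk u) = QuotientGroup.mk v}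

/-- Permutations of the section `U/L` induced by the members of a set `Δ` of permutations
of `G ⧸ L` stabilizing the image of `U` setwise. -/
def inducedSecOfQuot {G : Type*} [Group G] {L : Subgroup G} (Δ : Set (Equiv.Perm (G ⧸ L)))
    (U : Subgroup G) : Set (Equiv.Perm (U ⧸ L.subgroupOf U)) :=
  {σ | ∃ δ ∈ Δ,
    (∀ u : U, ∃ v : U, δ (QuotientGroup.mk (u : G)) = QuotientGroup.mk (v : G)) ∧
    ∀ u v : U, δ (QuotientGroup.mk (u : G)) = QuotientGroup.mk (v : G) →
      σ (QuotientGroup.mk u) = QuotientGroup.mk v}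

/-- `H` is a normal subgroup of `K` (both being subgroups of some ambient group). -/
def NormalIn {Γ : Type*} [Group Γ] (H K : Subgroup Γ) : Prop :=
  H ≤ K ∧ ∀ x ∈ K, ∀ h ∈ H, x * h * x⁻¹ ∈ H

/-- `H` is a composition series of the ambient group `Γ`: a chain
`⊥ = H 0 ⊴ H 1 ⊴ ⋯ ⊴ H m = ⊤` in which each term is a maximal proper normal subgroup
of the next one (equivalently, all successive quotients are simple). -/
def IsCompSeries {Γ : Type*} [Group Γ] {m : ℕ} (H : Fin (m + 1) → Subgroup Γ) : Prop :=
  H 0 = ⊥ ∧ H (Fin.last m) = ⊤ ∧ ∀ i : Fin m,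
    NormalIn (H i.castSucc) (H i.succ) ∧ H i.castSucc ≠ H i.succ ∧
    ∀ K : Subgroup Γ, H i.castSucc ≤ K → NormalIn K (H i.succ) →
      K = H i.castSucc ∨ K = H i.succ

/-- `Q` is a composition factor of `Γ`: `Q` is isomorphic (via a surjection with the right
kernel) to a successive quotient of some composition series of `Γ`. -/
def IsCompFactor (Γ : Type*) [Group Γ] (Q : Type*) [Group Q] : Prop :=
  ∃ (m : ℕ) (H : Fin (m + 1) → Subgroup Γ), IsCompSeries H ∧
    ∃ (i : Fin m) (φ : ↥(H i.succ) →* Q), Function.Surjective φ ∧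
      φ.ker = (H i.castSucc).subgroupOf (H i.succ)

namespace SRing

variable {G : Type*} [Group G] (A : SRing G)

lemma exists_basic_mem' (a : G) : ∃ X ∈ A.basic, a ∈ X := by
  obtain ⟨X, ⟨hX, ha⟩, -⟩ := A.isPartition.2 a
  exact ⟨X, hX, ha⟩

lemma mulRight_mem_aut' (g : G) : Equiv.mulRight g ∈ A.aut := by
  intro X _ a b
  simp [mul_inv_rev, mul_assoc]

lemma aut_mem_iff_of_isASet' {f : Equiv.Perm G} (hf : f ∈ A.aut) {S : Set G}
    (hS : A.IsASet S) (x y : G) : y * x⁻¹ ∈ S ↔ f y * (f x)⁻¹ ∈ S := by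
  constructor
  · intro h
    obtain ⟨X, hX, hmem⟩ := A.exists_basic_mem' (y * x⁻¹)
    exact hS X hX ⟨_, hmem, h⟩ ((hf X hX x y).mp hmem)
  · intro h
    obtain ⟨X, hX, hmem⟩ := A.exists_basic_mem' (f y * (f x)⁻¹)
    exact hS X hX ⟨_, hmem, h⟩ ((hf X hX x y).mpr hmem)

lemma aut_image_coset' {f : Equiv.Perm G} (hf : f ∈ A.aut) {S : Set G}
    (hS : A.IsASet S) (x : G) :
    f '' {y | y * x⁻¹ ∈ S} = {y | y * (f x)⁻¹ ∈ S} := by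
  ext z
  simp only [Set.mem_image, Set.mem_setOf_eq]
  constructor
  · rintro ⟨y, hy, rfl⟩
    exact (A.aut_mem_iff_of_isASet' hf hS x y).mp hy
  · intro hz
    exact ⟨f⁻¹ z, (A.aut_mem_iff_of_isASet' hf hS x (f⁻¹ z)).mpr
      (by simpa using hz), by simp⟩

end SRing

/-- Theorem 1.2(1). Let `A` be an S-ring over a finite abelian group `G`
satisfying the `U/L`-condition. Then `f ∈ Aut(A)` iff (i) `f` maps every `L`-coset onto an
`L`-coset and every `U`-coset onto a `U`-coset, (ii) the permutation of `G/L` induced by `f`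
is induced by some automorphism of `A`, and (iii) for every `g ∈ G` there are `h ∈ G` and an
automorphism `f'` of `A` stabilizing `U` setwise such that `f (u·g) = f' u · h` for all
`u ∈ U`.  (That is, `Aut(A)` is the canonical generalized wreath product
`Aut(A)^U ≀_{U/L} Aut(A)^{G/L}`.) -/
theorem mem_aut_iff_genWreath {G : Type*} [CommGroup G] [Fintype G]
    (A : SRing G) (L U : Subgroup G) (hUL : A.ULcondition L U) (f : Equiv.Perm G) :
    f ∈ A.aut ↔
      ((∀ x : G, f '' {y : G | y * x⁻¹ ∈ L} = {y : G | y * (f x)⁻¹ ∈ L}) ∧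
        (∀ x : G, f '' {y : G | y * x⁻¹ ∈ U} = {y : G | y * (f x)⁻¹ ∈ U})) ∧
      (∃ f' ∈ A.aut, ∀ x : G,
        (QuotientGroup.mk (f x) : G ⧸ L) = QuotientGroup.mk (f' x)) ∧
      (∀ g : G, ∃ h : G, ∃ f' ∈ A.aut, (∀ u ∈ U, f' u ∈ U) ∧
        ∀ u ∈ U, f (u * g) = f' u * h) := by
  obtain ⟨hLnorm, hLU, hLset, hUset, hcond⟩ := hUL
  constructor
  · intro hf
    refine ⟨⟨fun x => A.aut_image_coset' hf hLset x, fun x => A.aut_image_coset' hf hUset x⟩,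
      ⟨f, hf, fun x => rfl⟩, fun g => ?_⟩
    refine ⟨f g, (Equiv.mulRight (f g)⁻¹) * f * (Equiv.mulRight g), ?_, ?_, ?_⟩
    · exact mul_mem (mul_mem (A.mulRight_mem_aut' _) hf) (A.mulRight_mem_aut' _)
    · intro u hu
      have h1 : (u * g) * g⁻¹ ∈ (U : Set G) := by simpa using hu
      have := (A.aut_mem_iff_of_isASet' hf hUset g (u * g)).mp h1
      simpa [Equiv.Perm.mul_apply] using this
    · intro u hu
      simp [Equiv.Perm.mul_apply]
  · rintro ⟨⟨hL, hU⟩, ⟨f₂, hf₂, hq⟩, h3⟩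
    intro X hX x y
    by_cases hXU : X ⊆ (U : Set G)
    · obtain ⟨h, f', hf', hf'U, heq⟩ := h3 x
      have hx1 : f x = f' 1 * h := by simpa using heq 1 (one_mem U)
      constructor
      · intro hyx
        have huU : y * x⁻¹ ∈ U := hXU hyx
        have hy' : f y = f' (y * x⁻¹) * h := by
          simpa [inv_mul_cancel_right] using heq (y * x⁻¹) huU
        have key : f y * (f x)⁻¹ = f' (y * x⁻¹) * (f' 1)⁻¹ := by
          rw [hy', hx1, mul_inv_rev]
          group
        rw [key]
        have := (hf' X hX 1 (y * x⁻¹)).mp (by simpa using hyx)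
        simpa using this
      · intro hfxy
        have hfU : f y * (f x)⁻¹ ∈ (U : Set G) := hXU hfxy
        have : f y ∈ f '' {w | w * x⁻¹ ∈ U} := by
          rw [hU x]; exact hfU
        obtain ⟨z, hz, hzy⟩ := this
        have hyU : y * x⁻¹ ∈ U := by
          have hzy' : z = y := f.injective hzy
          rwa [← hzy']
        have hy' : f y = f' (y * x⁻¹) * h := by
          simpa [inv_mul_cancel_right] using heq (y * x⁻¹) hyU
        have key : f y * (f x)⁻¹ = f' (y * x⁻¹) * (f' 1)⁻¹ := by
          rw [hy', hx1, mul_inv_rev]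
          group
        rw [key] at hfxy
        have := (hf' X hX 1 (y * x⁻¹)).mpr (by simpa using hfxy)
        simpa using this
    · have hXUc : X ⊆ (↑U : Set G)ᶜ := fun a ha haU => hXU (hUset X hX ⟨a, ha, haU⟩)
      have hLX : (↑L : Set G) * X = X := (hcond X hX hXUc).1
      have hinv : ∀ a b : G, b * a⁻¹ ∈ L → (a ∈ X ↔ b ∈ X) := by
        intro a b hab
        constructor
        · intro ha
          rw [← hLX]
          exact ⟨b * a⁻¹, hab, a, ha, by group⟩
        · intro hb
          rw [← hLX]
          refine ⟨a * b⁻¹, ?_, b, hb, by group⟩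
          have := inv_mem hab
          simpa [mul_inv_rev] using this
      have hq' : ∀ z : G, f z * (f₂ z)⁻¹ ∈ L := by
        intro z
        have h1 : (f z)⁻¹ * f₂ z ∈ L := (QuotientGroup.eq).mp (hq z)
        have := inv_mem h1
        simpa [mul_inv_rev, mul_comm] using this
      have hmem : (f y * (f x)⁻¹) * (f₂ y * (f₂ x)⁻¹)⁻¹ ∈ L := by
        have heq2 : (f y * (f x)⁻¹) * (f₂ y * (f₂ x)⁻¹)⁻¹
            = (f y * (f₂ y)⁻¹) * (f x * (f₂ x)⁻¹)⁻¹ := by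
          simp [mul_inv_rev, mul_comm, mul_left_comm, mul_assoc]
        rw [heq2]
        exact mul_mem (hq' y) (inv_mem (hq' x))
      calc y * x⁻¹ ∈ X ↔ f₂ y * (f₂ x)⁻¹ ∈ X := hf₂ X hX x y
        _ ↔ f y * (f x)⁻¹ ∈ X := hinv _ _ hmem
end

section
/- Let G be a finite abelian group and A an S-ring over G satisfying the U/L-condition for A-subgroups L ≤ U; set S = U/L. Let Aut(A_U)^S denote the group of permutations of S induced by the elements of Aut(A_U) (each of which permutes the L-cosets in U), and let Aut(A_{G/L})^S denote the group of permutations of S induced by the elements of the setwise stabilizer in Aut(A_{G/L}) of the subset S = U/L of G/L. If the intersection Aut(A_U)^S ∩ Aut(A_{G/L})^S is not 2-equivalent to Aut(A_S), then A is not schurian. -/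
open scoped Pointwise

section Aux

open scoped Pointwise

variable {K : Type*} [Group K]

lemma SRing.exists_basic (A : SRing K) (g : K) : ∃ X ∈ A.basic, g ∈ X := by
  obtain ⟨X, ⟨hX, hg⟩, -⟩ := A.isPartition.2 g
  exact ⟨X, hX, hg⟩

lemma SRing.mem_aut_iff (A : SRing K) (f : Equiv.Perm K) :
    f ∈ A.aut ↔ ∀ X ∈ A.basic, ∀ g h : K, h * g⁻¹ ∈ X ↔ f h * (f g)⁻¹ ∈ X :=
  Iff.rfl

lemma SRing.aut_iff_of_isUnion (A : SRing K) {f : Equiv.Perm K}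
    (hf : f ∈ A.aut) {W : Set K} (hW : IsUnionOf A.basic W) (g h : K) :
    h * g⁻¹ ∈ W ↔ f h * (f g)⁻¹ ∈ W := by
  constructor
  · intro hm
    obtain ⟨X, hX, hgX⟩ := A.exists_basic (h * g⁻¹)
    exact hW X hX ⟨_, hgX, hm⟩ ((hf X hX g h).mp hgX)
  · intro hm
    obtain ⟨X, hX, hgX⟩ := A.exists_basic (f h * (f g)⁻¹)
    exact hW X hX ⟨_, hgX, hm⟩ ((hf X hX g h).mpr hgX)

lemma SRing.isUnion_mul [Finite K] (A : SRing K) {W X : Set K}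
    (hW : IsUnionOf A.basic W) (hX : X ∈ A.basic) :
    IsUnionOf A.basic (W * X) := by
  rintro Y hY ⟨z, hzY, hzWX⟩
  obtain ⟨w, hw, x, hx, rfl⟩ := hzWX
  obtain ⟨W₀, hW₀, hwW₀⟩ := A.exists_basic w
  have hW₀sub : W₀ ⊆ W := hW W₀ hW₀ ⟨w, hwW₀, hw⟩
  intro z' hz'Y
  have hcount := A.structConst W₀ hW₀ X hX Y hY _ hzY z' hz'Y
  have hpos : 0 < Set.ncard {p : K × K | p.1 ∈ W₀ ∧ p.2 ∈ X ∧ p.1 * p.2 = w * x} :=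
    (Set.ncard_pos (Set.toFinite _)).mpr ⟨(w, x), hwW₀, hx, rfl⟩
  rw [hcount] at hpos
  obtain ⟨⟨a, b⟩, ha, hb, hab⟩ := (Set.ncard_pos (Set.toFinite _)).mp hpos
  exact hab ▸ Set.mul_mem_mul (hW₀sub ha) hb

lemma rightMul_mem (g : K) : Equiv.mulRight g ∈ rightMulGroup K :=
  ⟨g, fun _ => rfl⟩

lemma gamma_mem_aut {A : SRing K} {Γ : Subgroup (Equiv.Perm K)}
    (hle : rightMulGroup K ≤ Γ)
    (hbasic : A.basic = {X : Set K | ∃ x : K, X = {y : K | ∃ γ ∈ Γ, γ 1 = 1 ∧ γ x = y}})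
    {f : Equiv.Perm K} (hf : f ∈ Γ) : f ∈ A.aut := by
  intro X hX g h
  rw [hbasic] at hX
  obtain ⟨x₀, rfl⟩ := hX
  set η : Equiv.Perm K := Equiv.mulRight (f g)⁻¹ * f * Equiv.mulRight g with hη
  have hηΓ : η ∈ Γ := mul_mem (mul_mem (hle (rightMul_mem _)) hf) (hle (rightMul_mem _))
  have hη1 : η 1 = 1 := by simp [hη, Equiv.Perm.mul_apply]
  have key : ∀ θ : Equiv.Perm K, θ ∈ Γ → θ 1 = 1 → ∀ z : K,
      z ∈ {y : K | ∃ γ ∈ Γ, γ 1 = 1 ∧ γ x₀ = y} →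
      θ z ∈ {y : K | ∃ γ ∈ Γ, γ 1 = 1 ∧ γ x₀ = y} := by
    rintro θ hθ hθ1 z ⟨β, hβ, hβ1, rfl⟩
    exact ⟨θ * β, mul_mem hθ hβ, by simp [Equiv.Perm.mul_apply, hβ1, hθ1], rfl⟩
  have hηval : η (h * g⁻¹) = f h * (f g)⁻¹ := by
    simp [hη, Equiv.Perm.mul_apply, inv_mul_cancel_right]
  constructor
  · intro hm
    have := key η hηΓ hη1 _ hm
    rwa [hηval] at this
  · intro hm
    have hinv1 : η⁻¹ 1 = 1 := by
      conv_lhs => rw [← hη1]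
      exact Equiv.symm_apply_apply η 1
    have := key η⁻¹ (inv_mem hηΓ) hinv1 _ hm
    rwa [← hηval, Equiv.Perm.inv_def, Equiv.symm_apply_apply] at this

/-- Descend a coset-preserving permutation to the quotient. -/
def descPerm (H : Subgroup K) (e : Equiv.Perm K)
    (hp : ∀ a b : K, a⁻¹ * b ∈ H ↔ (e a)⁻¹ * e b ∈ H) : Equiv.Perm (K ⧸ H) where
  toFun := Quotient.map' e (fun a b hab => QuotientGroup.leftRel_apply.mpr
    ((hp a b).mp (QuotientGroup.leftRel_apply.mp hab)))
  invFun := Quotient.map' e.symm (fun a b hab => by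
    rw [QuotientGroup.leftRel_apply] at hab ⊢
    have := (hp (e.symm a) (e.symm b))
    simp only [Equiv.apply_symm_apply] at this
    exact this.mpr hab)
  left_inv := fun q => Quotient.inductionOn' q (fun a => by
    simp [Quotient.map'_mk''])
  right_inv := fun q => Quotient.inductionOn' q (fun a => by
    simp [Quotient.map'_mk''])

lemma descPerm_mk (H : Subgroup K) (e : Equiv.Perm K)
    (hp : ∀ a b : K, a⁻¹ * b ∈ H ↔ (e a)⁻¹ * e b ∈ H) (a : K) :
    descPerm H e hp (QuotientGroup.mk a) = QuotientGroup.mk (e a) := rfl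

lemma mem_image_mk {H : Subgroup K} (Y : Set K) (c : K) :
    (QuotientGroup.mk c : K ⧸ H) ∈ QuotientGroup.mk '' Y ↔ c ∈ Y * (H : Set K) := by
  constructor
  · rintro ⟨y, hy, heq⟩
    have : y⁻¹ * c ∈ H := QuotientGroup.eq.mp heq
    have hc : c = y * (y⁻¹ * c) := by group
    exact hc ▸ Set.mul_mem_mul hy this
  · rintro ⟨y, hy, l, hl, rfl⟩
    exact ⟨y, hy, (QuotientGroup.eq.mpr (by simpa using hl)).symm⟩

end Aux
section Aux2

open scoped Pointwise

lemma mem_sec_image {G : Type*} [CommGroup G] {L U : Subgroup G} (hLU : L ≤ U)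
    {X : Set G} (hXU : X ⊆ ↑U) (c : U) :
    (QuotientGroup.mk c : U ⧸ L.subgroupOf U) ∈
      QuotientGroup.mk '' (((↑) : U → G) ⁻¹' X) ↔ (c : G) ∈ X * (L : Set G) := by
  constructor
  · rintro ⟨x, hx, heq⟩
    have h1 : x⁻¹ * c ∈ L.subgroupOf U := QuotientGroup.eq.mp heq
    have h2 : ((x : G))⁻¹ * c ∈ L := h1
    have hc : (c : G) = x * ((x : G)⁻¹ * c) := by group
    exact hc ▸ Set.mul_mem_mul hx h2
  · rintro ⟨x, hx, l, hl, hxl⟩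
    refine ⟨⟨x, hXU hx⟩, hx, ?_⟩
    rw [QuotientGroup.eq, Subgroup.mem_subgroupOf]
    have : (((⟨x, hXU hx⟩ : U)⁻¹ * c : U) : G) = l := by
      push_cast
      rw [← hxl]; group
    rw [this]; exact hl

lemma resUnion {G : Type*} [Group G] (A : SRing G) (U : Subgroup G) {W : Set G}
    (hW : IsUnionOf A.basic W) (hWU : W ⊆ ↑U) :
    IsUnionOf (A.resBasic U) (((↑) : U → G) ⁻¹' W) := by
  rintro Yr ⟨Y, hY, hYU, rfl⟩ ⟨y, hyY, hyW⟩ z hz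
  exact hW Y hY ⟨↑y, hyY, hyW⟩ hz

lemma inducedQuot_sub_aut {G : Type*} [CommGroup G] [Fintype G]
    (A : SRing G) (L U : Subgroup G) (hUL : A.ULcondition L U)
    (AU : SRing U) (hAU : AU.basic = A.resBasic U)
    (AS : SRing (U ⧸ L.subgroupOf U)) (hAS : AS.basic = A.secBasic U L)
    {φ : Equiv.Perm (U ⧸ L.subgroupOf U)}
    (hφ : φ ∈ inducedQuot (↑AU.aut : Set (Equiv.Perm U)) (L.subgroupOf U)) :
    φ ∈ AS.aut := by
  obtain ⟨γ, hγ, hcomm⟩ := hφ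
  rw [SRing.mem_aut_iff]
  rintro Xs hXs g h
  rw [hAS] at hXs
  obtain ⟨X, hX, hXU, rfl⟩ := hXs
  obtain ⟨a, rfl⟩ := QuotientGroup.mk_surjective g
  obtain ⟨b, rfl⟩ := QuotientGroup.mk_surjective h
  have hXL : IsUnionOf A.basic (X * (L : Set G)) := by
    have h0 := A.isUnion_mul hUL.2.2.1 hX
    rwa [mul_comm] at h0
  have hXLU : X * (L : Set G) ⊆ ↑U := by
    rintro z ⟨x, hx, l, hl, rfl⟩
    exact U.mul_mem (hXU hx) (hUL.2.1 hl)
  have hres : IsUnionOf AU.basic (((↑) : U → G) ⁻¹' (X * (L : Set G))) := by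
    rw [hAU]; exact resUnion A U hXL hXLU
  have hiff := AU.aut_iff_of_isUnion (SetLike.mem_coe.mp hγ) hres a b
  rw [hcomm, hcomm, ← QuotientGroup.mk_inv, ← QuotientGroup.mk_mul,
      ← QuotientGroup.mk_inv, ← QuotientGroup.mk_mul,
      mem_sec_image hUL.2.1 hXU, mem_sec_image hUL.2.1 hXU]
  have e1 : ((b * a⁻¹ : U) : G) ∈ X * (L : Set G) ↔ (b * a⁻¹ : U) ∈ ((↑) : U → G) ⁻¹' (X * (L : Set G)) := Iff.rfl
  have e2 : ((γ b * (γ a)⁻¹ : U) : G) ∈ X * (L : Set G) ↔ (γ b * (γ a)⁻¹ : U) ∈ ((↑) : U → G) ⁻¹' (X * (L : Set G)) := Iff.rfl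
  rw [e1, e2]
  exact hiff

end Aux2
section Aux3

open scoped Pointwise

lemma exists_phi {G : Type*} [CommGroup G] [Fintype G]
    (A : SRing G) (L U : Subgroup G) (hUL : A.ULcondition L U)
    (AU : SRing U) (hAU : AU.basic = A.resBasic U)
    (AGL : SRing (G ⧸ L)) (hAGL : AGL.basic = A.quotBasic L)
    {Γ : Subgroup (Equiv.Perm G)} (hle : rightMulGroup G ≤ Γ)
    (hbasic : A.basic = {X : Set G | ∃ x : G, X = {y : G | ∃ γ ∈ Γ, γ 1 = 1 ∧ γ x = y}})
    {X : Set G} (hX : X ∈ A.basic) (hXU : X ⊆ ↑U)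
    (s₁ s₂ t₁ t₂ : U ⧸ L.subgroupOf U)
    (hs : s₂ * s₁⁻¹ ∈ QuotientGroup.mk '' (((↑) : U → G) ⁻¹' X))
    (ht : t₂ * t₁⁻¹ ∈ QuotientGroup.mk '' (((↑) : U → G) ⁻¹' X)) :
    ∃ φ, φ ∈ (inducedQuot (↑AU.aut : Set (Equiv.Perm U)) (L.subgroupOf U)
          ∩ inducedSecOfQuot (↑AGL.aut : Set (Equiv.Perm (G ⧸ L))) U)
      ∧ φ s₁ = t₁ ∧ φ s₂ = t₂ := by
  obtain ⟨hLnorm, hLU, hLset, hUset, hcond⟩ := hUL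
  obtain ⟨x', hx'X, hx'mk⟩ := hs
  obtain ⟨y', hy'X, hy'mk⟩ := ht
  obtain ⟨u₁, hu₁⟩ := QuotientGroup.mk_surjective s₁
  obtain ⟨v₁, hv₁⟩ := QuotientGroup.mk_surjective t₁
  -- produce γ ∈ Γ fixing 1 with γ x' = y'
  obtain ⟨γ, hγΓ, hγ1, hγx⟩ : ∃ γ ∈ Γ, γ 1 = 1 ∧ γ (↑x' : G) = ↑y' := by
    have hX' := hX
    rw [hbasic] at hX'
    obtain ⟨x₀, hX0⟩ := hX'
    rw [hX0] at hx'X hy'X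
    obtain ⟨γ₁, hγ₁Γ, hγ₁1, hγ₁⟩ := hx'X
    obtain ⟨γ₂, hγ₂Γ, hγ₂1, hγ₂⟩ := hy'X
    refine ⟨γ₂ * γ₁⁻¹, mul_mem hγ₂Γ (inv_mem hγ₁Γ), ?_, ?_⟩
    · have h1 : γ₁⁻¹ (1 : G) = 1 := by
        conv_lhs => rw [← hγ₁1]
        exact Equiv.symm_apply_apply γ₁ 1
      simp [Equiv.Perm.mul_apply, h1, hγ₂1]
    · have h1 : γ₁⁻¹ (↑x' : G) = x₀ := by
        rw [← hγ₁, Equiv.Perm.inv_def, Equiv.symm_apply_apply]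
      simp [Equiv.Perm.mul_apply, h1, hγ₂]
  set f : Equiv.Perm G :=
    Equiv.mulRight (v₁ : G) * γ * Equiv.mulRight ((u₁ : G))⁻¹ with hfdef
  have hfΓ : f ∈ Γ :=
    mul_mem (mul_mem (hle (rightMul_mem _)) hγΓ) (hle (rightMul_mem _))
  have hfaut : f ∈ A.aut := gamma_mem_aut hle hbasic hfΓ
  have hfu₁ : f ↑u₁ = ↑v₁ := by
    simp [hfdef, Equiv.Perm.mul_apply, hγ1]
  have hfx : f (↑x' * ↑u₁) = ↑y' * ↑v₁ := by
    simp [hfdef, Equiv.Perm.mul_apply, mul_inv_cancel_right, hγx]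
  have hfinv : f⁻¹ ↑v₁ = ↑u₁ := by rw [← hfu₁, Equiv.Perm.inv_def, Equiv.symm_apply_apply]
  -- f maps U into U, both ways
  have hU1 : ∀ u : U, f ↑u ∈ U := by
    intro u
    have h1 : ((u : G) * (↑u₁)⁻¹ : G) ∈ (↑U : Set G) :=
      SetLike.mem_coe.mpr (mul_mem u.2 (inv_mem u₁.2))
    have h2 := (A.aut_iff_of_isUnion hfaut hUset ↑u₁ ↑u).mp h1
    rw [hfu₁] at h2
    have h3 := mul_mem (SetLike.mem_coe.mp h2) v₁.2
    simpa using h3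
  have hU2 : ∀ u : U, f⁻¹ ↑u ∈ U := by
    intro u
    have h1 : ((u : G) * (↑v₁)⁻¹ : G) ∈ (↑U : Set G) :=
      SetLike.mem_coe.mpr (mul_mem u.2 (inv_mem v₁.2))
    have h2 := (A.aut_iff_of_isUnion (inv_mem hfaut) hUset ↑v₁ ↑u).mp h1
    rw [hfinv] at h2
    have h3 := mul_mem (SetLike.mem_coe.mp h2) u₁.2
    simpa using h3
  -- the induced permutation of U
  set γU : Equiv.Perm U :=
    { toFun := fun u => ⟨f ↑u, hU1 u⟩
      invFun := fun u => ⟨f⁻¹ ↑u, hU2 u⟩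
      left_inv := fun u => Subtype.ext (Equiv.symm_apply_apply f ↑u)
      right_inv := fun u => Subtype.ext (Equiv.apply_symm_apply f ↑u) } with hγUdef
  have hγUcoe : ∀ u : U, (γU u : G) = f ↑u := fun u => rfl
  have hγUaut : γU ∈ AU.aut := by
    rw [SRing.mem_aut_iff, hAU]
    rintro Yr ⟨Y, hY, hYU, rfl⟩ g h
    have := hfaut Y hY ↑g ↑h
    constructor
    · intro hm
      have hm' : ((h : G)) * (↑g)⁻¹ ∈ Y := by
        have e : (((h * g⁻¹ : U)) : G) = ↑h * (↑g)⁻¹ := by push_cast; rfl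
        rw [← e]; exact hm
      have := this.mp hm'
      show ((γU h * (γU g)⁻¹ : U) : G) ∈ Y
      push_cast [hγUcoe]
      exact this
    · intro hm
      have hm' : f ↑h * (f ↑g)⁻¹ ∈ Y := by
        have e : (((γU h * (γU g)⁻¹ : U)) : G) = f ↑h * (f ↑g)⁻¹ := by
          push_cast [hγUcoe]; rfl
        rw [← e]; exact hm
      have h2 := this.mpr hm'
      show (((h * g⁻¹ : U)) : G) ∈ Y
      push_cast
      exact h2
  -- coset-preservation data
  have hLpres : ∀ a b : G, a⁻¹ * b ∈ L ↔ (f a)⁻¹ * f b ∈ L := by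
    intro a b
    have h1 := A.aut_iff_of_isUnion hfaut hLset a b
    rw [mul_comm b, mul_comm (f b)] at h1
    exact h1
  have hp : ∀ a b : U, a⁻¹ * b ∈ L.subgroupOf U ↔ (γU a)⁻¹ * γU b ∈ L.subgroupOf U := by
    intro a b
    rw [Subgroup.mem_subgroupOf, Subgroup.mem_subgroupOf]
    have e1 : ((a⁻¹ * b : U) : G) = (↑a)⁻¹ * ↑b := by push_cast; rfl
    have e2 : (((γU a)⁻¹ * γU b : U) : G) = (f ↑a)⁻¹ * f ↑b := by
      push_cast [hγUcoe]; rfl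
    rw [e1, e2]
    exact hLpres ↑a ↑b
  set φ := descPerm (L.subgroupOf U) γU hp with hφdef
  set δ := descPerm L f hLpres with hδdef
  have hδaut : δ ∈ AGL.aut := by
    rw [SRing.mem_aut_iff, hAGL]
    rintro Yq ⟨Y, hY, rfl⟩ g h
    obtain ⟨a, rfl⟩ := QuotientGroup.mk_surjective g
    obtain ⟨b, rfl⟩ := QuotientGroup.mk_surjective h
    have hYL : IsUnionOf A.basic (Y * (L : Set G)) := by
      have h0 := A.isUnion_mul hLset hY
      rwa [mul_comm] at h0
    rw [hδdef, descPerm_mk, descPerm_mk, ← QuotientGroup.mk_inv, ← QuotientGroup.mk_mul,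
        ← QuotientGroup.mk_inv, ← QuotientGroup.mk_mul, mem_image_mk, mem_image_mk]
    exact A.aut_iff_of_isUnion hfaut hYL a b
  -- values of φ
  have hφ1 : φ s₁ = t₁ := by
    rw [← hu₁, hφdef, descPerm_mk, ← hv₁]
    exact congrArg _ (Subtype.ext hfu₁)
  have hs₂ : s₂ = QuotientGroup.mk (x' * u₁) := by
    have e : (QuotientGroup.mk (x' * u₁) : U ⧸ L.subgroupOf U) = (s₂ * s₁⁻¹) * s₁ := by
      rw [QuotientGroup.mk_mul, hx'mk, hu₁]
    rw [e]; group
  have hφ2 : φ s₂ = t₂ := by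
    rw [hs₂, hφdef, descPerm_mk]
    have e : γU (x' * u₁) = y' * v₁ := Subtype.ext (by
      rw [hγUcoe]
      push_cast
      exact hfx)
    rw [e, QuotientGroup.mk_mul, hy'mk, hv₁]
    group
  refine ⟨φ, ⟨⟨γU, hγUaut, fun x => by rw [hφdef, descPerm_mk]⟩, ?_⟩, hφ1, hφ2⟩
  refine ⟨δ, hδaut, fun u => ⟨⟨f ↑u, hU1 u⟩, by rw [hδdef]; exact descPerm_mk L f hLpres (↑u : G)⟩, ?_⟩
  intro u v huv
  rw [hδdef, descPerm_mk] at huv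
  have hL1 : (f ↑u)⁻¹ * ↑v ∈ L := QuotientGroup.eq.mp huv
  rw [hφdef, descPerm_mk, QuotientGroup.eq, Subgroup.mem_subgroupOf]
  have e : (((γU u)⁻¹ * v : U) : G) = (f ↑u)⁻¹ * ↑v := by
    push_cast [hγUcoe]; rfl
  rw [e]
  exact hL1

end Aux3
/-- Corollary 5.8.  Let `A` be an S-ring over a finite abelian group `G`
satisfying the `U/L`-condition, `S = U/L`.  If the intersection of the groups of
permutations of `S` induced by `Aut(A_U)` and by `Aut(A_{G/L})` is not 2-equivalent to
`Aut(A_S)`, then `A` is not schurian. -/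
theorem not_isSchurian_of_not_twoEquiv {G : Type*} [CommGroup G] [Fintype G]
    (A : SRing G) (L U : Subgroup G) (hUL : A.ULcondition L U)
    (AU : SRing U) (hAU : AU.basic = A.resBasic U)
    (AGL : SRing (G ⧸ L)) (hAGL : AGL.basic = A.quotBasic L)
    (AS : SRing (U ⧸ L.subgroupOf U)) (hAS : AS.basic = A.secBasic U L)
    (h : ¬ TwoEquiv
        (inducedQuot (↑AU.aut : Set (Equiv.Perm U)) (L.subgroupOf U)
          ∩ inducedSecOfQuot (↑AGL.aut : Set (Equiv.Perm (G ⧸ L))) U)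
        (↑AS.aut : Set (Equiv.Perm (U ⧸ L.subgroupOf U)))) :
    ¬ A.IsSchurian := by
  rintro ⟨Γ, hle, hbasic⟩
  apply h
  intro p
  obtain ⟨XS, ⟨hXS, hsXS⟩, -⟩ := AS.isPartition.2 (p.2 * p.1⁻¹)
  have hXS' := hXS
  rw [hAS] at hXS'
  obtain ⟨X, hX, hXU, hXSeq⟩ := hXS'
  ext q
  constructor
  · rintro ⟨φ, ⟨hφQ, -⟩, rfl⟩
    exact ⟨φ, inducedQuot_sub_aut A L U hUL AU hAU AS hAS hφQ, rfl⟩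
  · rintro ⟨δ', hδ', rfl⟩
    have hδ'aut : δ' ∈ AS.aut := hδ'
    have ht : δ' p.2 * (δ' p.1)⁻¹ ∈ XS :=
      ((SRing.mem_aut_iff AS δ').mp hδ'aut XS hXS p.1 p.2).mp hsXS
    rw [hXSeq] at hsXS ht
    obtain ⟨φ, hφmem, hφ1, hφ2⟩ := exists_phi A L U hUL AU hAU AGL hAGL hle hbasic
      hX hXU p.1 p.2 (δ' p.1) (δ' p.2) hsXS ht
    exact ⟨φ, hφmem, by rw [hφ1, hφ2]⟩
end

section
/- Let G be a finite group that is the internal direct product of subgroups G₁ and G₂, and let A be an S-ring over G such that G₁ and G₂ are A-subgroups. Then for every basic set X of A and each i ∈ {1, 2}, the projection π_i(X) of X to G_i is a basic set of A. In particular, every product X₁·X₂ with X₁ a basic set of A contained in G₁ and X₂ a basic set of A contained in G₂ is an A-set. -/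
open scoped Pointwise

section Helpers

variable {G : Type*} [Group G]

lemma SRing.basic_nonempty (A : SRing G) {X : Set G} (hX : X ∈ A.basic) : X.Nonempty := by
  rcases Set.eq_empty_or_nonempty X with h | h
  · exact absurd (h ▸ hX) A.isPartition.1
  · exact h

lemma SRing.exists_basic_mem (A : SRing G) (g : G) : ∃ X ∈ A.basic, g ∈ X := by
  obtain ⟨X, ⟨hX, hg⟩, -⟩ := A.isPartition.2 g
  exact ⟨X, hX, hg⟩

lemma SRing.basic_eq_of_mem (A : SRing G) {X Y : Set G} (hX : X ∈ A.basic)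
    (hY : Y ∈ A.basic) {g : G} (hgX : g ∈ X) (hgY : g ∈ Y) : X = Y := by
  obtain ⟨Z, -, huniq⟩ := A.isPartition.2 g
  rw [huniq X ⟨hX, hgX⟩, huniq Y ⟨hY, hgY⟩]

lemma SRing.isASet_basic (A : SRing G) {X : Set G} (hX : X ∈ A.basic) : A.IsASet X := by
  intro Z hZ hne
  obtain ⟨g, hgZ, hgX⟩ := hne
  exact (A.basic_eq_of_mem hZ hX hgZ hgX).le

lemma SRing.isASet_mul_basic [Finite G] (A : SRing G) {X Y : Set G}
    (hX : X ∈ A.basic) (hY : Y ∈ A.basic) : A.IsASet (X * Y) := by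
  intro Z hZ hne z' hz'
  obtain ⟨z, hzZ, hzXY⟩ := hne
  obtain ⟨x, hx, y, hy, hxy⟩ := hzXY
  have hcount := A.structConst X hX Y hY Z hZ z hzZ z' hz'
  have h1 : 0 < Set.ncard {p : G × G | p.1 ∈ X ∧ p.2 ∈ Y ∧ p.1 * p.2 = z} := by
    rw [Set.ncard_pos (Set.toFinite _)]
    exact ⟨(x, y), hx, hy, hxy⟩
  rw [hcount] at h1
  obtain ⟨⟨x', y'⟩, hx', hy', hxy'⟩ := (Set.ncard_pos (Set.toFinite _)).mp h1
  exact ⟨x', hx', y', hy', hxy'⟩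

lemma SRing.isASet_mul [Finite G] (A : SRing G) {S T : Set G}
    (hS : A.IsASet S) (hT : A.IsASet T) : A.IsASet (S * T) := by
  intro Z hZ hne
  obtain ⟨z, hzZ, hzST⟩ := hne
  obtain ⟨s, hs, t, ht, hst⟩ := hzST
  obtain ⟨Xs, hXs, hsXs⟩ := A.exists_basic_mem s
  obtain ⟨Xt, hXt, htXt⟩ := A.exists_basic_mem t
  have hXsS : Xs ⊆ S := hS Xs hXs ⟨s, hsXs, hs⟩
  have hXtT : Xt ⊆ T := hT Xt hXt ⟨t, htXt, ht⟩
  have h := A.isASet_mul_basic hXs hXt Z hZ ⟨z, hzZ, s, hsXs, t, htXt, hst⟩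
  exact h.trans (Set.mul_subset_mul hXsS hXtT)

lemma SRing.isASet_inter (A : SRing G) {S T : Set G} (hS : A.IsASet S) (hT : A.IsASet T) :
    A.IsASet (S ∩ T) := by
  intro Z hZ hne
  obtain ⟨z, hzZ, hzS, hzT⟩ := hne
  exact Set.subset_inter (hS Z hZ ⟨z, hzZ, hzS⟩) (hT Z hZ ⟨z, hzZ, hzT⟩)

end Helpers

/-- Lemma 2.1.  Let `G` be a finite group that is the internal direct
product of subgroups `G₁` and `G₂`, and `A` an S-ring over `G` with `G₁, G₂`
`A`-subgroups.  Then the projections of every basic set of `A` onto `G₁` and `G₂` are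
basic sets of `A`; in particular every product `X₁·X₂` of basic sets `X₁ ⊆ G₁`,
`X₂ ⊆ G₂` is an `A`-set. -/
theorem proj_basic_and_prod_isASet {G : Type*} [Group G] [Finite G]
    (G₁ G₂ : Subgroup G) (h₁ : G₁.Normal) (h₂ : G₂.Normal)
    (hdir : ∀ g : G, ∃! p : G₁ × G₂, g = ↑p.1 * ↑p.2)
    (A : SRing G) (hA1 : A.IsASet ↑G₁) (hA2 : A.IsASet ↑G₂) :
    (∀ X ∈ A.basic,
        {a : G | a ∈ G₁ ∧ ∃ b ∈ G₂, a * b ∈ X} ∈ A.basic ∧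
        {b : G | b ∈ G₂ ∧ ∃ a ∈ G₁, a * b ∈ X} ∈ A.basic) ∧
      ∀ X₁ ∈ A.basic, ∀ X₂ ∈ A.basic, X₁ ⊆ ↑G₁ → X₂ ⊆ ↑G₂ → A.IsASet (X₁ * X₂) := by
  constructor
  · intro X hX
    -- pick a point of X and its decomposition
    obtain ⟨x₀, hx₀⟩ := A.basic_nonempty hX
    obtain ⟨⟨a₀, b₀⟩, hp, -⟩ := hdir x₀
    simp only at hp
    constructor
    · -- first projection
      set T : Set G := {a : G | a ∈ G₁ ∧ ∃ b ∈ G₂, a * b ∈ X} with hTdef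
      have heq : T = (X * ↑G₂) ∩ ↑G₁ := by
        ext a
        constructor
        · rintro ⟨ha1, b, hb, hab⟩
          exact ⟨⟨a * b, hab, b⁻¹, inv_mem hb, by group⟩, ha1⟩
        · rintro ⟨⟨x, hx, s, hs, hxs⟩, ha1⟩
          refine ⟨ha1, s⁻¹, inv_mem hs, ?_⟩
          rw [← hxs, mul_inv_cancel_right]
          exact hx
      have hTset : A.IsASet T := by
        rw [heq]
        exact A.isASet_inter (A.isASet_mul (A.isASet_basic hX) hA2) hA1
      have ha₀T : (a₀ : G) ∈ T := ⟨a₀.2, b₀, b₀.2, by rw [← hp]; exact hx₀⟩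
      obtain ⟨Y, hY, haY⟩ := A.exists_basic_mem (a₀ : G)
      have hYsub : Y ⊆ T := hTset Y hY ⟨a₀, haY, ha₀T⟩
      have hXsub : X ⊆ Y * ↑G₂ :=
        A.isASet_mul (A.isASet_basic hY) hA2 X hX
          ⟨x₀, hx₀, a₀, haY, b₀, b₀.2, hp.symm⟩
      have hTY : T ⊆ Y := by
        rintro a' ⟨ha'1, b', hb', hab'⟩
        obtain ⟨y, hyY, s, hs, hys⟩ := hXsub hab'
        have hyG1 : y ∈ G₁ := (hYsub hyY).1
        obtain ⟨p, -, hup⟩ := hdir (a' * b')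
        have e1 := hup (⟨a', ha'1⟩, ⟨b', hb'⟩) rfl
        have e2 := hup (⟨y, hyG1⟩, ⟨s, hs⟩) hys.symm
        have : a' = y := congrArg (fun q : G₁ × G₂ => (q.1 : G)) (e1.trans e2.symm)
        exact this ▸ hyY
      rwa [Set.Subset.antisymm hTY hYsub]
    · -- second projection
      set T : Set G := {b : G | b ∈ G₂ ∧ ∃ a ∈ G₁, a * b ∈ X} with hTdef
      have heq : T = (↑G₁ * X) ∩ ↑G₂ := by
        ext b
        constructor
        · rintro ⟨hb2, a, ha, hab⟩
          exact ⟨⟨a⁻¹, inv_mem ha, a * b, hab, by group⟩, hb2⟩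
        · rintro ⟨⟨s, hs, x, hx, hsx⟩, hb2⟩
          refine ⟨hb2, s⁻¹, inv_mem hs, ?_⟩
          rw [← hsx, inv_mul_cancel_left]
          exact hx
      have hTset : A.IsASet T := by
        rw [heq]
        exact A.isASet_inter (A.isASet_mul hA1 (A.isASet_basic hX)) hA2
      have hb₀T : (b₀ : G) ∈ T := ⟨b₀.2, a₀, a₀.2, by rw [← hp]; exact hx₀⟩
      obtain ⟨Y, hY, hbY⟩ := A.exists_basic_mem (b₀ : G)
      have hYsub : Y ⊆ T := hTset Y hY ⟨b₀, hbY, hb₀T⟩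
      have hXsub : X ⊆ ↑G₁ * Y :=
        A.isASet_mul hA1 (A.isASet_basic hY) X hX
          ⟨x₀, hx₀, a₀, a₀.2, b₀, hbY, hp.symm⟩
      have hTY : T ⊆ Y := by
        rintro b' ⟨hb'2, a', ha'1, hab'⟩
        obtain ⟨s, hs, y, hyY, hsy⟩ := hXsub hab'
        have hyG2 : y ∈ G₂ := (hYsub hyY).1
        obtain ⟨p, -, hup⟩ := hdir (a' * b')
        have e1 := hup (⟨a', ha'1⟩, ⟨b', hb'2⟩) rfl
        have e2 := hup (⟨s, hs⟩, ⟨y, hyG2⟩) hsy.symm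
        have : b' = y := congrArg (fun q : G₁ × G₂ => (q.2 : G)) (e1.trans e2.symm)
        exact this ▸ hyY
      rwa [Set.Subset.antisymm hTY hYsub]
  · intro X₁ hX₁ X₂ hX₂ _ _
    exact A.isASet_mul_basic hX₁ hX₂
end

section
/- Let I be a finite index set and, for each i ∈ I, let G_i be a finite cyclic group and Δ_i a permutation group with (G_i)_right ≤ Δ_i ≤ Hol(G_i). Let G = ∏_{i∈I} G_i and let Δ = ∏_{i∈I} Δ_i ≤ Sym(G) act coordinatewise. Then every subgroup Δ' of Δ that is 2-equivalent to Δ is equal to Δ. -/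
open scoped Pointwise

/-- Lemma 10.1.  Let `G = ∏ᵢ Gᵢ` with each `Gᵢ` finite cyclic, and
`Δ = ∏ᵢ Δᵢ ≤ Sym(G)` acting coordinatewise, where `(Gᵢ)_right ≤ Δᵢ ≤ Hol(Gᵢ)`.  Then
every subgroup of `Δ` that is 2-equivalent to `Δ` equals `Δ`. -/
theorem twoEquiv_subgroup_of_prod_hol_eq {ι : Type*} [Fintype ι]
    (Gi : ι → Type*) [∀ i, Group (Gi i)] [∀ i, Fintype (Gi i)] [∀ i, IsCyclic (Gi i)]
    (Δi : ∀ i, Subgroup (Equiv.Perm (Gi i)))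
    (hlow : ∀ i, rightMulGroup (Gi i) ≤ Δi i)
    (hup : ∀ i, (↑(Δi i) : Set (Equiv.Perm (Gi i))) ⊆ HolSet (Gi i))
    (Δ : Subgroup (Equiv.Perm (∀ i, Gi i)))
    (hΔ : (↑Δ : Set (Equiv.Perm (∀ i, Gi i))) =
      {π | ∃ δ : ∀ i, Equiv.Perm (Gi i), (∀ i, δ i ∈ Δi i) ∧ ∀ (x : ∀ i, Gi i) (i : ι),
        π x i = δ i (x i)})
    (Δ' : Subgroup (Equiv.Perm (∀ i, Gi i))) (hle : Δ' ≤ Δ)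
    (h2 : TwoEquiv (↑Δ' : Set (Equiv.Perm (∀ i, Gi i)))
      (↑Δ : Set (Equiv.Perm (∀ i, Gi i)))) :
    Δ' = Δ := by
  refine le_antisymm hle ?_
  -- choose a generator of each cyclic group
  have hgen : ∀ i, ∃ gi : Gi i, ∀ x : Gi i, x ∈ Subgroup.zpowers gi :=
    fun i => IsCyclic.exists_generator
  choose g hg using hgen
  intro δ hδ
  -- use 2-equivalence at the pair (1, g)
  have hpair := h2 ((1 : ∀ i, Gi i), g)
  have hmem : ((δ 1, δ g) : (∀ i, Gi i) × (∀ i, Gi i)) ∈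
      {q : (∀ i, Gi i) × (∀ i, Gi i) | ∃ γ ∈ (↑Δ : Set (Equiv.Perm (∀ i, Gi i))),
        q = (γ 1, γ g)} := ⟨δ, hδ, rfl⟩
  rw [← hpair] at hmem
  obtain ⟨δ', hδ', heq⟩ := hmem
  have h1 : δ' 1 = δ 1 := by
    have := congrArg Prod.fst heq; simpa using this.symm
  have h2' : δ' g = δ g := by
    have := congrArg Prod.snd heq; simpa using this.symm
  -- π := δ'⁻¹ * δ fixes 1 and g
  set π : Equiv.Perm (∀ i, Gi i) := (δ' : Equiv.Perm (∀ i, Gi i))⁻¹ * δ with hπ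
  have hπΔ : π ∈ Δ := mul_mem (inv_mem (hle hδ')) hδ
  have hπ1 : π 1 = 1 := by
    simp only [hπ, Equiv.Perm.mul_apply, ← h1, Equiv.Perm.inv_def, Equiv.symm_apply_apply]
  have hπg : π g = g := by
    simp only [hπ, Equiv.Perm.mul_apply, ← h2', Equiv.Perm.inv_def, Equiv.symm_apply_apply]
  -- π acts coordinatewise by elements of Δi i ⊆ Hol(Gi i)
  have hπset : π ∈ (↑Δ : Set (Equiv.Perm (∀ i, Gi i))) := hπΔ
  rw [hΔ] at hπset
  obtain ⟨ρ, hρmem, hρ⟩ := hπset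
  have hid : ∀ (x : ∀ i, Gi i), π x = x := by
    intro x
    funext i
    obtain ⟨σ, s, hσ⟩ := hup i (hρmem i)
    -- s = 1
    have hs : s = 1 := by
      have := hρ 1 i
      rw [hπ1] at this
      have h1i : ρ i (1 : Gi i) = (1 : Gi i) := by
        simpa using this.symm
      rw [hσ 1] at h1i
      simpa using h1i
    -- σ fixes the generator
    have hσg : σ (g i) = g i := by
      have := hρ g i
      rw [hπg] at this
      have : ρ i (g i) = g i := this.symm
      rw [hσ (g i), hs, mul_one] at this
      exact this
    -- hence σ = id
    have hσid : ∀ y : Gi i, σ y = y := by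
      intro y
      obtain ⟨n, hn⟩ := hg i y
      rw [← hn, map_zpow, hσg]
    rw [hρ x i, hσ (x i), hs, mul_one, hσid]
  -- therefore π = 1 and δ = δ'
  have : δ = (δ' : Equiv.Perm (∀ i, Gi i)) := by
    have hπone : π = 1 := Equiv.ext fun x => hid x
    have : (δ' : Equiv.Perm (∀ i, Gi i))⁻¹ * δ = 1 := hπone
    exact (inv_mul_eq_one.mp this).symm
  rw [this]
  exact hδ'
end
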